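/- arXiv:1907.13530 — 3 statements merged into one kernel-verified Lean document; each statement's English description precedes it below -/
import Mathlib

section
/- Let m ≥ 4 be an integer, let π be a permutation of {0,1,…,m−3}, and let e_i, f_i ∈ Z_2 for 0 ≤ i ≤ m−3. Let a = Ψ_{2^{m−2}−1}(g^0) and b = Ψ_{2^{m−2}−1}(g^1) be the truncated ±1 sequences of length N = 2^{m−1}+2 associated with the generalized Boolean functions g^0, g^1 of the construction. Then (a,b) is a binary Z-complementary pair with zero correlation zone width 2^{m−2}+2^{π(m−3)}+1, i.e., ρ_a(τ)+ρ_b(τ) = 0 for every integer τ with 1 ≤ τ ≤ 2^{m−2}+2^{π(m−3)}. -/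
open Finset

/-- The `j`-th binary digit of the integer `i`, as an element of `ZMod 2`. -/
def bitZ (i j : ℕ) : ZMod 2 := ((i / 2 ^ j) % 2 : ℕ)

/-- The generalized Boolean function `ζ^d` of the construction (in variables `x_0,…,x_{m-3}`). -/
def zeta (m : ℕ) (π : ℕ → ℕ) (d : ZMod 2) (x : ℕ → ZMod 2) : ZMod 2 :=
  (∑ α ∈ Finset.range (m - 3), x (π α) * x (π (α + 1))) + d * x (π (m - 3))

/-- The generalized Boolean function `η^d` of the construction. -/
def eta (m : ℕ) (π : ℕ → ℕ) (d : ZMod 2) (x : ℕ → ZMod 2) : ZMod 2 :=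
  (∑ α ∈ Finset.range (m - 3), (1 - x (π α)) * (1 - x (π (α + 1))))
    + (1 - d) * x (π (m - 3))

/-- The generalized Boolean function `g^d` of the construction (in `m` variables). -/
def gbf (m : ℕ) (π : ℕ → ℕ) (e f : ℕ → ZMod 2) (d : ZMod 2) (x : ℕ → ZMod 2) : ZMod 2 :=
  x (m - 2) * (1 - x (m - 1)) * zeta m π d x
    + (1 - x (m - 2)) * x (m - 1) * eta m π d x
    + d * (1 - x (m - 2)) * (1 - x (m - 1))
    + x (m - 2) * x (m - 1)
    + (∑ i ∈ Finset.range (m - 2), e i * x i)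
    + (∑ i ∈ Finset.range (m - 2), f i * (1 - x i))

/-- The ±1 sequence `Ψ(F)` associated with a generalized Boolean function:
its `i`-th entry is `(-1)^{F(r_{i,0}, r_{i,1}, …)}`. -/
def Psi (F : (ℕ → ZMod 2) → ZMod 2) (i : ℕ) : ℤ := (-1) ^ (F (bitZ i)).val

/-- The truncated sequence `Ψ_L(F)`, obtained by deleting the first (and last) `L`
entries of `Ψ(F)`: its `k`-th entry is the `(L+k)`-th entry of `Ψ(F)`. -/
def PsiT (F : (ℕ → ZMod 2) → ZMod 2) (L : ℕ) (k : ℕ) : ℤ := Psi F (L + k)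

/-- Aperiodic autocorrelation of a length-`N` sequence `a` at time shift `τ`. -/
def rho (N : ℕ) (a : ℕ → ℤ) (τ : ℕ) : ℤ :=
  ∑ k ∈ Finset.range (N - τ), a k * a (k + τ)

/-!
Index the sequences by `i = 2^(m-2) - 1 + k`. On the middle half `2^(m-2) ≤ i < 3·2^(m-2)`, the sum
`∑ (1 - x_a)(1 - x_b)` in `η^d` telescopes to `∑ x_a x_b + x_{π 0} + x_{π(m-3)} + (m - 3)`, so
`g^d(2^(m-2) + z)`, as a function of the `m - 1` bits of `z`, is a Golay–Davis–Jedwab function: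
the path form of `m-2, π 0, …, π (m-3)`, plus `d · x_{π(m-3)}`, plus an affine function.
Such a pair is complementary: in `ρ_a(τ) + ρ_b(τ)` the terms at positions `z` where `z` and `z + τ`
differ at the end `π (m-3)` of the path cancel between `a` and `b`, and the others are paired with
opposite signs by flipping, in both `z` and `z + τ`, the vertex just after the last one where they
differ. Only two entries lie outside the middle half, at `2^(m-2) - 1` and `3·2^(m-2)`, where `g^d`
is `d + ∑ e_i` and `1 + ∑ f_i`. For `τ ≤ 2^(m-2)` the terms involving them cancel between `a` and
`b` if bit `π (m-3)` of `τ - 1` is clear, and the left ones cancel the right ones if it is set; for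
larger `τ` they cancel between `a` and `b` because `τ - 2^(m-2) - 1 < 2^π(m-3)` has that bit clear.
-/

lemma bitZ_eq_toNat_testBit (i j : ℕ) : bitZ i j = ((i.testBit j).toNat : ZMod 2) := by
  rw [Nat.toNat_testBit]; rfl

lemma bitZ_eq_bitZ_iff {a b i j : ℕ} : bitZ a i = bitZ b j ↔ a.testBit i = b.testBit j := by
  rw [bitZ_eq_toNat_testBit, bitZ_eq_toNat_testBit]
  cases a.testBit i <;> cases b.testBit j <;> decide

lemma bitZ_of_lt_two_pow {x j : ℕ} (hx : x < 2 ^ j) : bitZ x j = 0 := by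
  rw [bitZ_eq_toNat_testBit, Nat.testBit_lt_two_pow hx]; rfl

lemma bitZ_xor_two_pow (z β : ℕ) : bitZ (z ^^^ 2 ^ β) = bitZ z + Pi.single β 1 := by
  funext j
  simp only [bitZ_eq_toNat_testBit, Nat.testBit_xor, Nat.testBit_two_pow, Pi.add_apply,
    Pi.single_apply]
  by_cases h : j = β
  · subst h; simp only [decide_true, if_true]; cases z.testBit j <;> decide
  · simp [h, Ne.symm h]

lemma eq_of_bitZ_eq {N z w : ℕ} (hz : z < 2 ^ N) (hw : w < 2 ^ N)
    (h : ∀ j < N, bitZ z j = bitZ w j) : z = w := by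
  refine Nat.eq_of_testBit_eq fun j => ?_
  rcases lt_or_ge j N with hj | hj
  · exact bitZ_eq_bitZ_iff.1 (h j hj)
  · have hN : 2 ^ N ≤ 2 ^ j := Nat.pow_le_pow_right two_pos hj
    rw [Nat.testBit_lt_two_pow (by omega), Nat.testBit_lt_two_pow (by omega)]

lemma bitZ_two_pow_sub_one_sub {n x j : ℕ} (hx : x < 2 ^ n) (hj : j < n) :
    bitZ (2 ^ n - 1 - x) j = 1 - bitZ x j := by
  rw [show 2 ^ n - 1 - x = 2 ^ n - (x + 1) by omega, bitZ_eq_toNat_testBit, bitZ_eq_toNat_testBit,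
    Nat.testBit_two_pow_sub_succ hx, decide_eq_true hj, Bool.true_and]
  cases x.testBit j <;> decide

lemma bitZ_two_pow_mul_add {n x : ℕ} (c : ℕ) (hx : x < 2 ^ n) (j : ℕ) :
    bitZ (2 ^ n * c + x) j = if j < n then bitZ x j else bitZ c (j - n) := by
  rw [bitZ_eq_toNat_testBit, Nat.testBit_two_pow_mul_add c hx]
  split_ifs <;> rw [bitZ_eq_toNat_testBit]

lemma bitZ_two_pow_add_of_lt {n z : ℕ} (hz : z < 2 ^ (n + 1)) :
    (∀ j < n, bitZ (2 ^ n + z) j = bitZ z j) ∧ bitZ (2 ^ n + z) n = 1 - bitZ z n ∧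
      bitZ (2 ^ n + z) (n + 1) = bitZ z n := by
  rcases lt_or_ge z (2 ^ n) with h | h
  · have e := bitZ_two_pow_mul_add 1 h
    have e0 := bitZ_two_pow_mul_add 0 h
    simp only [mul_one, mul_zero, zero_add] at e e0
    refine ⟨fun j hj => by simp [e, hj], ?_, ?_⟩ <;> simp [e, e0] <;> decide
  · obtain ⟨x, rfl⟩ := Nat.exists_eq_add_of_le h
    have hx : x < 2 ^ n := by rw [pow_succ] at hz; omega
    have e := bitZ_two_pow_mul_add 2 hx
    have e1 := bitZ_two_pow_mul_add 1 hx
    simp only [mul_one] at e1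
    rw [show 2 ^ n + (2 ^ n + x) = 2 ^ n * 2 + x by ring]
    refine ⟨fun j hj => by simp [e, e1, hj], ?_, ?_⟩ <;> simp [e, e1] <;> decide

lemma Nat.xor_two_pow_eq_add {z β : ℕ} (h : z.testBit β = false) : z ^^^ 2 ^ β = z + 2 ^ β := by
  obtain ⟨q, r, hr, rfl⟩ : ∃ q r, r < 2 ^ β ∧ z = 2 ^ β * q + r :=
    ⟨z / 2 ^ β, z % 2 ^ β, Nat.mod_lt _ (by positivity), (Nat.div_add_mod z _).symm⟩
  have hq : q % 2 = 0 := by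
    simpa [Nat.testBit_mul_two_pow_add_eq, Nat.testBit_lt_two_pow hr] using h
  obtain ⟨t, rfl⟩ : ∃ t, q = 2 * t := ⟨q / 2, by omega⟩
  rw [show 2 ^ β * (2 * t) + r + 2 ^ β = 2 ^ β * (2 ^ 1 * t + 1) + r by ring,
    show 2 ^ β * (2 * t) + r = 2 ^ β * (2 ^ 1 * t + 0) + r by ring]
  refine Nat.eq_of_testBit_eq fun j => ?_
  rw [Nat.testBit_xor, Nat.testBit_two_pow, Nat.testBit_two_pow_mul_add _ hr,
    Nat.testBit_two_pow_mul_add _ hr, Nat.testBit_two_pow_mul_add _ (by norm_num),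
    Nat.testBit_two_pow_mul_add _ (by norm_num)]
  rcases lt_trichotomy j β with hj | rfl | hj
  · simp [hj, hj.ne']
  · simp
  · simp [hj.not_gt, hj.ne, show ¬ j - β < 1 by omega]

lemma Nat.xor_two_pow_add_of_testBit_eq {z τ β : ℕ} (h : z.testBit β = (z + τ).testBit β) :
    (z + τ) ^^^ 2 ^ β = (z ^^^ 2 ^ β) + τ := by
  cases hz : z.testBit β
  · rw [Nat.xor_two_pow_eq_add hz, Nat.xor_two_pow_eq_add (h ▸ hz)]; omega
  · have key : ∀ w, w.testBit β = true → w = (w ^^^ 2 ^ β) + 2 ^ β := fun w hw => by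
      rw [← Nat.xor_two_pow_eq_add (by simp [Nat.testBit_xor, hw]), xor_cancel_right]
    have h1 := key z hz
    have h2 := key (z + τ) (h ▸ hz)
    omega

lemma neg_one_pow_val_add (s t : ZMod 2) :
    (-1 : ℤ) ^ (s + t).val = (-1) ^ s.val * (-1) ^ t.val := by
  revert s t; decide

lemma neg_one_pow_val_add_one (s : ZMod 2) : (-1 : ℤ) ^ (s + 1).val = -(-1) ^ s.val := by
  revert s; decide

def corrExp (F : (ℕ → ZMod 2) → ZMod 2) (τ k : ℕ) : ZMod 2 := F (bitZ k) + F (bitZ (k + τ))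

lemma Psi_mul_Psi_add (F : (ℕ → ZMod 2) → ZMod 2) (i τ : ℕ) :
    Psi F i * Psi F (i + τ) = (-1) ^ (corrExp F τ i).val := by
  rw [Psi, Psi, corrExp, neg_one_pow_val_add]

lemma rho_Psi_add_rho_Psi (F G : (ℕ → ZMod 2) → ZMod 2) (N τ : ℕ) :
    rho N (Psi F) τ + rho N (Psi G) τ
      = ∑ k ∈ range (N - τ), ((-1) ^ (corrExp F τ k).val + (-1) ^ (corrExp G τ k).val) := by
  simp only [rho, ← sum_add_distrib, Psi_mul_Psi_add]

lemma rho_congr {M τ : ℕ} {s t : ℕ → ℤ} (h : ∀ k < M, s k = t k) : rho M s τ = rho M t τ :=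
  sum_congr rfl fun k hk => by rw [mem_range] at hk; rw [h k (by omega), h (k + τ) (by omega)]

lemma rho_add_two (s : ℕ → ℤ) {M τ : ℕ} (hτ : τ ≤ M) :
    rho (M + 2) s τ = s 0 * s τ + rho M (fun k => s (k + 1)) τ + s (M + 1 - τ) * s (M + 1) := by
  simp only [rho]
  rw [show M + 2 - τ = M - τ + 1 + 1 by omega, sum_range_succ, sum_range_succ',
    show M - τ + 1 + τ = M + 1 by omega, show M - τ + 1 = M + 1 - τ by omega]
  simp only [zero_add, add_right_comm _ τ 1]
  ring

lemma PsiT_mul_PsiT (F : (ℕ → ZMod 2) → ZMod 2) (L : ℕ) {i j τ : ℕ} (h : j = i + τ) :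
    PsiT F L i * PsiT F L j = (-1) ^ (corrExp F τ (L + i)).val := by
  rw [PsiT, PsiT, h, ← add_assoc, Psi_mul_Psi_add]

def pathQuad (n : ℕ) (σ : ℕ → ℕ) (X : ℕ → ZMod 2) : ZMod 2 :=
  ∑ α ∈ range n, X (σ α) * X (σ (α + 1))

lemma pathQuad_congr {n : ℕ} {σ : ℕ → ℕ} {X Y : ℕ → ZMod 2} (h : ∀ α ≤ n, X (σ α) = Y (σ α)) :
    pathQuad n σ X = pathQuad n σ Y :=
  sum_congr rfl fun α hα => by
    rw [mem_range] at hα; rw [h α hα.le, h (α + 1) hα]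

lemma pathQuad_one_sub (n : ℕ) (σ : ℕ → ℕ) (X : ℕ → ZMod 2) :
    pathQuad n σ (1 - X) = pathQuad n σ X + X (σ 0) + X (σ n) + n := by
  induction n with
  | zero => simp [pathQuad]; ring_nf; reduce_mod_char
  | succ n ih =>
    simp only [pathQuad, sum_range_succ] at ih ⊢
    rw [ih]
    push_cast
    simp only [Pi.sub_apply, Pi.one_apply]
    ring_nf; reduce_mod_char

lemma pathQuad_add_single {n γ : ℕ} {σ : ℕ → ℕ} (hσ : Set.InjOn σ (Set.Iio (n + 1)))
    (hγ : γ ≤ n) (X : ℕ → ZMod 2) :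
    pathQuad n σ (X + Pi.single (σ γ) 1) = pathQuad n σ X
      + (if 0 < γ then X (σ (γ - 1)) else 0) + (if γ < n then X (σ (γ + 1)) else 0) := by
  have hs : ∀ α ≤ n, (Pi.single (σ γ) 1 : ℕ → ZMod 2) (σ α) = if α = γ then 1 else 0 := by
    intro α hα
    simp only [Pi.single_apply, hσ.eq_iff (show α ∈ Set.Iio (n + 1) by simp; omega)
      (show γ ∈ Set.Iio (n + 1) by simp; omega)]
  have hterm : ∀ α ∈ range n, (X + Pi.single (σ γ) 1 : ℕ → ZMod 2) (σ α)
        * (X + Pi.single (σ γ) 1 : ℕ → ZMod 2) (σ (α + 1))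
      = X (σ α) * X (σ (α + 1)) + (if α = γ - 1 ∧ 0 < γ then X (σ (γ - 1)) else 0)
        + (if α = γ then X (σ (γ + 1)) else 0) := by
    intro α hα
    rw [mem_range] at hα
    simp only [Pi.add_apply, hs α hα.le, hs (α + 1) hα]
    by_cases h1 : α = γ
    · subst h1; simp [show ¬(α = α - 1 ∧ 0 < α) by omega]; ring
    · by_cases h2 : α + 1 = γ
      · subst h2; simp; ring
      · simp [h1, h2, show ¬(α = γ - 1 ∧ 0 < γ) by omega]
  rw [pathQuad, sum_congr rfl hterm, sum_add_distrib, sum_add_distrib, ← pathQuad]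
  congr 1
  · congr 1
    split_ifs with h
    · rw [sum_eq_single_of_mem (γ - 1) (mem_range.2 (by omega)) (fun b _ hb => if_neg (by tauto)),
        if_pos ⟨rfl, h⟩]
    · exact sum_eq_zero fun b _ => if_neg (by tauto)
  · rw [sum_ite_eq']; simp

def golayFun (n : ℕ) (σ : ℕ → ℕ) (ℓ : (ℕ → ZMod 2) → ZMod 2) (d : ZMod 2) (X : ℕ → ZMod 2) :
    ZMod 2 :=
  pathQuad n σ X + d * X (σ n) + ℓ X

lemma golayFun_one (n : ℕ) (σ : ℕ → ℕ) (ℓ : (ℕ → ZMod 2) → ZMod 2) (X : ℕ → ZMod 2) :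
    golayFun n σ ℓ 1 X = golayFun n σ ℓ 0 X + X (σ n) := by
  simp only [golayFun]; ring

def lastDiffSucc (n : ℕ) (σ : ℕ → ℕ) (X Y : ℕ → ZMod 2) : ℕ :=
  {α ∈ range (n + 1) | X (σ α) ≠ Y (σ α)}.sup (· + 1)

section LastDiffSucc

variable {n α : ℕ} {σ : ℕ → ℕ} {X Y : ℕ → ZMod 2}

lemma lt_lastDiffSucc (hα : α ≤ n) (h : X (σ α) ≠ Y (σ α)) : α < lastDiffSucc n σ X Y := by
  have hmem : α ∈ {α ∈ range (n + 1) | X (σ α) ≠ Y (σ α)} := by simp [h]; omega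
  exact Finset.le_sup (f := (· + 1)) hmem

lemma eq_of_lastDiffSucc_le (hα : α ≤ n) (h : lastDiffSucc n σ X Y ≤ α) :
    X (σ α) = Y (σ α) := by
  by_contra hne
  exact absurd (lt_lastDiffSucc hα hne) (by omega)

lemma exists_lastDiffSucc_eq (h : ∃ α ≤ n, X (σ α) ≠ Y (σ α)) :
    ∃ α ≤ n, X (σ α) ≠ Y (σ α) ∧ lastDiffSucc n σ X Y = α + 1 := by
  obtain ⟨α, hα, hne⟩ := h
  obtain ⟨β, hβ, hsup⟩ := exists_mem_eq_sup {α ∈ range (n + 1) | X (σ α) ≠ Y (σ α)}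
    ⟨α, by simp [hne]; omega⟩ (· + 1)
  simp only [mem_filter, mem_range] at hβ
  exact ⟨β, by omega, hβ.2, hsup⟩

lemma lastDiffSucc_le (hend : X (σ n) = Y (σ n)) (h : ∃ α ≤ n, X (σ α) ≠ Y (σ α)) :
    lastDiffSucc n σ X Y ≤ n := by
  obtain ⟨α, hα, hne, hγ⟩ := exists_lastDiffSucc_eq h
  have : α ≠ n := by rintro rfl; exact hne hend
  omega

lemma lastDiffSucc_add_add (S : ℕ → ZMod 2) :
    lastDiffSucc n σ (X + S) (Y + S) = lastDiffSucc n σ X Y := by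
  simp [lastDiffSucc]

end LastDiffSucc

section Golay

variable {n : ℕ} {σ : ℕ → ℕ} {ℓ : (ℕ → ZMod 2) → ZMod 2}

/-- Of the two path edges at the flipped vertex, the one towards the last difference of `X` and `Y`
changes `F X + F Y` by one, the other by zero. -/
lemma golayFun_add_single_add (hσ : Set.InjOn σ (Set.Iio (n + 1)))
    (hℓ : ∀ X Y, ℓ (X + Y) = ℓ X + ℓ Y + ℓ 0) {X Y : ℕ → ZMod 2} (hend : X (σ n) = Y (σ n))
    (hdiff : ∃ α ≤ n, X (σ α) ≠ Y (σ α)) (d : ZMod 2) :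
    golayFun n σ ℓ d (X + Pi.single (σ (lastDiffSucc n σ X Y)) 1)
        + golayFun n σ ℓ d (Y + Pi.single (σ (lastDiffSucc n σ X Y)) 1)
      = golayFun n σ ℓ d X + golayFun n σ ℓ d Y + 1 := by
  have hγn := lastDiffSucc_le hend hdiff
  obtain ⟨α, -, hne, hγ⟩ := exists_lastDiffSucc_eq hdiff
  set γ := lastDiffSucc n σ X Y
  have hprev : X (σ (γ - 1)) + Y (σ (γ - 1)) = 1 := by
    rw [hγ, Nat.add_sub_cancel]; revert hne; generalize X (σ α) = a; generalize Y (σ α) = b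
    revert a b; decide
  have hnext : (if γ < n then X (σ (γ + 1)) else 0) + (if γ < n then Y (σ (γ + 1)) else 0) = 0 := by
    split_ifs with h
    · rw [eq_of_lastDiffSucc_le (X := X) (Y := Y) (by omega : γ + 1 ≤ n) (by omega)]
      exact CharTwo.add_self_eq_zero _
    · simp
  simp only [golayFun, pathQuad_add_single hσ hγn, if_pos (show 0 < γ by omega),
    hℓ _ (Pi.single _ _), Pi.add_apply]
  linear_combination (norm := (ring_nf; reduce_mod_char)) hprev + hnext

/-- The sign-reversing involution on the terms of `ρ_a(τ) + ρ_b(τ)`; its fixed points are the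
terms that already cancel between `a` and `b`. -/
def golayPartner (n : ℕ) (σ : ℕ → ℕ) (τ z : ℕ) : ℕ :=
  if bitZ z (σ n) = bitZ (z + τ) (σ n) then z ^^^ 2 ^ σ (lastDiffSucc n σ (bitZ z) (bitZ (z + τ)))
  else z

lemma golayPartner_of_ne {τ z : ℕ} (h : bitZ z (σ n) ≠ bitZ (z + τ) (σ n)) :
    golayPartner n σ τ z = z :=
  if_neg h

lemma corrExp_golayFun_one_of_ne {τ z : ℕ} (h : bitZ z (σ n) ≠ bitZ (z + τ) (σ n)) :
    corrExp (golayFun n σ ℓ 1) τ z = corrExp (golayFun n σ ℓ 0) τ z + 1 := by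
  have hsum : bitZ z (σ n) + bitZ (z + τ) (σ n) = 1 := by
    revert h; generalize bitZ z (σ n) = a, bitZ (z + τ) (σ n) = b; revert a b; decide
  simp only [corrExp, golayFun_one]
  linear_combination hsum

lemma golayPartner_spec_of_eq (hσ : Set.BijOn σ (Set.Iio (n + 1)) (Set.Iio (n + 1)))
    (hℓ : ∀ X Y, ℓ (X + Y) = ℓ X + ℓ Y + ℓ 0) {τ z : ℕ} (hτ : τ ≠ 0) (hz : z + τ < 2 ^ (n + 1))
    (hend : bitZ z (σ n) = bitZ (z + τ) (σ n)) :
    golayPartner n σ τ z + τ < 2 ^ (n + 1) ∧ golayPartner n σ τ (golayPartner n σ τ z) = z ∧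
      golayPartner n σ τ z ≠ z ∧ ∀ d, corrExp (golayFun n σ ℓ d) τ (golayPartner n σ τ z)
        = corrExp (golayFun n σ ℓ d) τ z + 1 := by
  set γ := lastDiffSucc n σ (bitZ z) (bitZ (z + τ))
  set z' := z ^^^ 2 ^ σ γ
  have hz' : golayPartner n σ τ z = z' := if_pos hend
  have hdiff : ∃ α ≤ n, bitZ z (σ α) ≠ bitZ (z + τ) (σ α) := by
    by_contra! h
    have : z = z + τ := eq_of_bitZ_eq (N := n + 1) (by omega) hz fun j hj => by
      obtain ⟨α, hα, rfl⟩ := hσ.surjOn (show j ∈ Set.Iio (n + 1) from hj)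
      exact h α (Nat.lt_succ_iff.1 hα)
    omega
  have hγ : γ ≤ n := lastDiffSucc_le hend hdiff
  have hβ : σ γ < n + 1 := hσ.mapsTo (show γ ∈ Set.Iio (n + 1) by simp; omega)
  have hshift : (z + τ) ^^^ 2 ^ σ γ = z' + τ := Nat.xor_two_pow_add_of_testBit_eq
    (bitZ_eq_bitZ_iff.1 (eq_of_lastDiffSucc_le hγ le_rfl))
  have hX : bitZ z' = bitZ z + Pi.single (σ γ) 1 := bitZ_xor_two_pow _ _
  have hY : bitZ (z' + τ) = bitZ (z + τ) + Pi.single (σ γ) 1 := by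
    rw [← hshift, bitZ_xor_two_pow]
  rw [hz']
  refine ⟨?_, ?_, ?_, fun d => ?_⟩
  · rw [← hshift]
    exact Nat.xor_lt_two_pow hz (Nat.pow_lt_pow_right one_lt_two hβ)
  · have hend' : bitZ z' (σ n) = bitZ (z' + τ) (σ n) := by simp [hX, hY, hend]
    rw [golayPartner, if_pos hend', hX, hY, lastDiffSucc_add_add, xor_cancel_right]
  · intro h
    have := congrFun hX (σ γ)
    rw [h] at this
    simp at this
  · simp only [corrExp, hX, hY]
    exact golayFun_add_single_add hσ.injOn hℓ hend hdiff d

theorem golayFun_rho_add_rho_eq_zero (hσ : Set.BijOn σ (Set.Iio (n + 1)) (Set.Iio (n + 1)))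
    (hℓ : ∀ X Y, ℓ (X + Y) = ℓ X + ℓ Y + ℓ 0) {τ : ℕ} (hτ : τ ≠ 0) :
    rho (2 ^ (n + 1)) (Psi (golayFun n σ ℓ 0)) τ + rho (2 ^ (n + 1)) (Psi (golayFun n σ ℓ 1)) τ
      = 0 := by
  rw [rho_Psi_add_rho_Psi]
  have hzero : ∀ z, bitZ z (σ n) ≠ bitZ (z + τ) (σ n) →
      (-1 : ℤ) ^ (corrExp (golayFun n σ ℓ 0) τ z).val
        + (-1) ^ (corrExp (golayFun n σ ℓ 1) τ z).val = 0 := fun z h => by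
    rw [corrExp_golayFun_one_of_ne h, neg_one_pow_val_add_one, add_neg_cancel]
  refine sum_involution (fun z _ => golayPartner n σ τ z) (fun z hz => ?_) (fun z hz hT => ?_)
    (fun z hz => ?_) (fun z hz => ?_) <;> rw [mem_range] at hz <;>
    by_cases hend : bitZ z (σ n) = bitZ (z + τ) (σ n)
  · obtain ⟨-, -, -, hflip⟩ := golayPartner_spec_of_eq hσ hℓ hτ (by omega) hend
    rw [hflip, hflip, neg_one_pow_val_add_one, neg_one_pow_val_add_one]; ring
  · rw [golayPartner_of_ne hend, hzero z hend, add_zero]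
  · exact (golayPartner_spec_of_eq hσ hℓ hτ (by omega) hend).2.2.1
  · exact absurd (hzero z hend) hT
  · have := (golayPartner_spec_of_eq hσ hℓ hτ (by omega) hend).1
    rw [mem_range]; omega
  · rwa [golayPartner_of_ne hend, mem_range]
  · exact (golayPartner_spec_of_eq hσ hℓ hτ (by omega) hend).2.1
  · rw [golayPartner_of_ne hend, golayPartner_of_ne hend]

end Golay

def affinePart (n : ℕ) (e f : ℕ → ZMod 2) (X : ℕ → ZMod 2) : ZMod 2 :=
  ∑ i ∈ range n, e i * X i + ∑ i ∈ range n, f i * (1 - X i)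

section AffinePart

variable {n : ℕ} {e f : ℕ → ZMod 2}

lemma affinePart_congr {X Y : ℕ → ZMod 2} (h : ∀ i < n, X i = Y i) :
    affinePart n e f X = affinePart n e f Y := by
  simp only [affinePart]
  congr 1 <;> exact sum_congr rfl fun i hi => by rw [h i (mem_range.1 hi)]

lemma affinePart_add (X Y : ℕ → ZMod 2) :
    affinePart n e f (X + Y) = affinePart n e f X + affinePart n e f Y + affinePart n e f 0 := by
  simp only [affinePart, ← sum_add_distrib]
  refine sum_congr rfl fun i _ => ?_
  simp only [Pi.add_apply, Pi.zero_apply]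
  ring_nf; reduce_mod_char

lemma affinePart_one_sub_add (X : ℕ → ZMod 2) :
    affinePart n e f (1 - X) + affinePart n e f X = ∑ i ∈ range n, e i + ∑ i ∈ range n, f i := by
  simp only [affinePart, ← sum_add_distrib]
  refine sum_congr rfl fun i _ => ?_
  simp only [Pi.sub_apply, Pi.one_apply]
  ring

end AffinePart

def consPath (v : ℕ) (π : ℕ → ℕ) : ℕ → ℕ
  | 0 => v
  | α + 1 => π α

lemma consPath_bijOn {k : ℕ} {π : ℕ → ℕ} (hπ : Set.BijOn π (Set.Iio k) (Set.Iio k)) :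
    Set.BijOn (consPath k π) (Set.Iio (k + 1)) (Set.Iio (k + 1)) := by
  refine ⟨?_, ?_, ?_⟩
  · rintro (_ | α) hα
    · simp [consPath]
    · have := hπ.mapsTo (show α ∈ Set.Iio k by simp at hα ⊢; omega)
      simp only [consPath, Set.mem_Iio] at this ⊢; omega
  · rintro (_ | α) hα (_ | β) hβ h
    · rfl
    · have := hπ.mapsTo (show β ∈ Set.Iio k by simp at hβ ⊢; omega)
      simp only [consPath, Set.mem_Iio] at h this; omega
    · have := hπ.mapsTo (show α ∈ Set.Iio k by simp at hα ⊢; omega)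
      simp only [consPath, Set.mem_Iio] at h this; omega
    · simp only [consPath] at h
      rw [hπ.injOn (show α ∈ Set.Iio k by simp at hα ⊢; omega)
        (show β ∈ Set.Iio k by simp at hβ ⊢; omega) h]
  · intro j hj
    rcases lt_or_eq_of_le (Nat.lt_succ_iff.1 hj) with hj | rfl
    · obtain ⟨α, hα, rfl⟩ := hπ.surjOn hj
      exact ⟨α + 1, by simp at hα ⊢; omega, rfl⟩
    · exact ⟨0, by simp, rfl⟩

lemma pathQuad_consPath (k v : ℕ) (π : ℕ → ℕ) (X : ℕ → ZMod 2) :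
    pathQuad (k + 1) (consPath v π) X = X v * X (π 0) + pathQuad k π X := by
  simp only [pathQuad, sum_range_succ']
  rw [add_comm]; rfl

def midAffine (m : ℕ) (e f : ℕ → ZMod 2) (X : ℕ → ZMod 2) : ZMod 2 :=
  ((m - 3 : ℕ) : ZMod 2) * X (m - 2) + affinePart (m - 2) e f X

def midGolayFun (m : ℕ) (π : ℕ → ℕ) (e f : ℕ → ZMod 2) (d : ZMod 2) : (ℕ → ZMod 2) → ZMod 2 :=
  golayFun (m - 2) (consPath (m - 2) π) (midAffine m e f) d

section Construction

variable {m : ℕ} {π : ℕ → ℕ} (e f : ℕ → ZMod 2)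

lemma midAffine_add (X Y : ℕ → ZMod 2) :
    midAffine m e f (X + Y) = midAffine m e f X + midAffine m e f Y + midAffine m e f 0 := by
  simp only [midAffine, affinePart_add, Pi.add_apply, Pi.zero_apply]
  ring

lemma midGolayFun_apply (hm : 3 ≤ m) (d : ZMod 2) (X : ℕ → ZMod 2) :
    midGolayFun m π e f d X = X (m - 2) * X (π 0) + pathQuad (m - 3) π X + d * X (π (m - 3))
      + ((m - 3 : ℕ) : ZMod 2) * X (m - 2) + affinePart (m - 2) e f X := by
  obtain ⟨k, rfl⟩ : ∃ k, m = k + 3 := ⟨m - 3, by omega⟩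
  simp only [midGolayFun, golayFun, midAffine, show k + 3 - 2 = k + 1 by omega,
    show k + 3 - 3 = k by omega, pathQuad_consPath, consPath]
  ring

lemma midGolayFun_one (hm : 3 ≤ m) (X : ℕ → ZMod 2) :
    midGolayFun m π e f 1 X = midGolayFun m π e f 0 X + X (π (m - 3)) := by
  rw [midGolayFun_apply e f hm, midGolayFun_apply e f hm]
  ring

variable (hm : 3 ≤ m) (hπ : Set.MapsTo π (Set.Iio (m - 2)) (Set.Iio (m - 2)))
include hm hπ

lemma gbf_eq_of_low_bits (d : ZMod 2) {x X : ℕ → ZMod 2} (hX : ∀ j < m - 2, x j = X j) :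
    gbf m π e f d x = x (m - 2) * (1 - x (m - 1)) * (pathQuad (m - 3) π X + d * X (π (m - 3)))
      + (1 - x (m - 2)) * x (m - 1) * (pathQuad (m - 3) π (1 - X) + (1 - d) * X (π (m - 3)))
      + d * (1 - x (m - 2)) * (1 - x (m - 1)) + x (m - 2) * x (m - 1)
      + affinePart (m - 2) e f X := by
  have hπX : ∀ α ≤ m - 3, x (π α) = X (π α) :=
    fun α hα => hX _ (hπ (show α ∈ Set.Iio (m - 2) by simp; omega))
  rw [← pathQuad_congr hπX,
    ← pathQuad_congr (X := 1 - x) (Y := 1 - X) (fun α hα => by simp [hπX α hα]),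
    ← affinePart_congr hX, ← hπX (m - 3) le_rfl]
  simp only [gbf, zeta, eta, pathQuad, affinePart, Pi.sub_apply, Pi.one_apply]
  ring

lemma gbf_two_pow_add (d : ZMod 2) {z : ℕ} (hz : z < 2 ^ (m - 1)) :
    gbf m π e f d (bitZ (2 ^ (m - 2) + z)) = midGolayFun m π e f d (bitZ z) := by
  obtain ⟨hlow, hmid, hhigh⟩ := bitZ_two_pow_add_of_lt (n := m - 2) (z := z)
    (by rwa [show m - 2 + 1 = m - 1 by omega])
  rw [show m - 2 + 1 = m - 1 by omega] at hhigh
  rw [gbf_eq_of_low_bits e f hm hπ d hlow, hmid, hhigh, midGolayFun_apply e f hm,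
    pathQuad_one_sub, show m - 2 = m - 3 + 1 by omega]
  obtain hc | hc : bitZ z (m - 3 + 1) = 0 ∨ bitZ z (m - 3 + 1) = 1 := by
    generalize bitZ z (m - 3 + 1) = c; revert c; decide
  · rw [hc]; ring
  · rw [hc]; ring_nf; reduce_mod_char

lemma gbf_two_pow_sub_one (d : ZMod 2) :
    gbf m π e f d (bitZ (2 ^ (m - 2) - 1)) = d + ∑ i ∈ range (m - 2), e i := by
  have hlt : ∀ j ≥ m - 2, 2 ^ (m - 2) - 1 < 2 ^ j := fun j hj =>
    (Nat.sub_lt (by positivity) one_pos).trans_le (Nat.pow_le_pow_right two_pos hj)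
  rw [gbf_eq_of_low_bits e f hm hπ d (X := 1) fun j hj => by
      simpa [bitZ_of_lt_two_pow (Nat.one_le_two_pow)] using
        bitZ_two_pow_sub_one_sub (x := 0) (by positivity) hj,
    bitZ_of_lt_two_pow (hlt _ le_rfl), bitZ_of_lt_two_pow (hlt _ (by omega))]
  simp [affinePart]

lemma gbf_three_mul_two_pow (d : ZMod 2) :
    gbf m π e f d (bitZ (3 * 2 ^ (m - 2))) = 1 + ∑ i ∈ range (m - 2), f i := by
  have hbits := bitZ_two_pow_mul_add (n := m - 2) 3 (x := 0) (by positivity)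
  simp only [add_zero] at hbits
  rw [mul_comm, gbf_eq_of_low_bits e f hm hπ d (x := bitZ (2 ^ (m - 2) * 3)) (X := 0) fun j hj => by
      simp [hbits, hj, bitZ_of_lt_two_pow], hbits, hbits, if_neg (by omega), if_neg (by omega),
    show m - 1 - (m - 2) = 1 by omega, Nat.sub_self]
  simp [affinePart, show bitZ 3 0 = 1 from rfl, show bitZ 3 1 = 1 from rfl]

end Construction

lemma neg_one_pow_val_sum_eq_zero {a₀ a₁ b₀ b₁ : ZMod 2}
    (h : (a₁ = a₀ + 1 ∧ b₁ = b₀ + 1) ∨ (b₀ = a₀ + 1 ∧ b₁ = a₁ + 1)) :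
    (-1 : ℤ) ^ a₀.val + (-1) ^ a₁.val + ((-1) ^ b₀.val + (-1) ^ b₁.val) = 0 := by
  rcases h with ⟨rfl, rfl⟩ | ⟨rfl, rfl⟩ <;>
    rw [neg_one_pow_val_add_one, neg_one_pow_val_add_one] <;> ring

section Boundary

variable {m : ℕ} {π : ℕ → ℕ} (e f : ℕ → ZMod 2) (hm : 3 ≤ m)
  (hπ : Set.MapsTo π (Set.Iio (m - 2)) (Set.Iio (m - 2)))
include hm hπ

lemma midGolayFun_two_pow_add_complement {y : ℕ} (hy : y < 2 ^ (m - 2)) :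
    midGolayFun m π e f 0 (bitZ (2 ^ (m - 2) + (2 ^ (m - 2) - 1 - y)))
        + midGolayFun m π e f 0 (bitZ y)
      = ∑ i ∈ range (m - 2), e i + ∑ i ∈ range (m - 2), f i + 1 + bitZ y (π (m - 3)) := by
  have hc : 2 ^ (m - 2) - 1 - y < 2 ^ (m - 2) := by omega
  obtain ⟨hlow, hmid, -⟩ := bitZ_two_pow_add_of_lt (n := m - 2) (z := 2 ^ (m - 2) - 1 - y)
    (by rw [pow_succ]; omega)
  have hW : ∀ j < m - 2, bitZ (2 ^ (m - 2) + (2 ^ (m - 2) - 1 - y)) j = (1 - bitZ y) j :=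
    fun j hj => by rw [hlow j hj, bitZ_two_pow_sub_one_sub hy hj]; rfl
  have hπ' : ∀ α ≤ m - 3, π α < m - 2 := fun α hα => hπ (show α ∈ Set.Iio (m - 2) by simp; omega)
  rw [midGolayFun_apply e f hm, midGolayFun_apply e f hm, hmid, bitZ_of_lt_two_pow hc,
    bitZ_of_lt_two_pow hy, pathQuad_congr fun α hα => hW _ (hπ' α hα), affinePart_congr hW,
    hW _ (hπ' 0 (Nat.zero_le _)), pathQuad_one_sub]
  linear_combination (norm := (simp only [Pi.sub_apply, Pi.one_apply]; ring_nf; reduce_mod_char))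
    affinePart_one_sub_add (n := m - 2) (e := e) (f := f) (bitZ y)

lemma corrExp_boundary_sum {τ : ℕ} (hτ1 : 1 ≤ τ) (hτ2 : τ ≤ 2 ^ (m - 2) + 2 ^ π (m - 3)) :
    (-1 : ℤ) ^ (corrExp (gbf m π e f 0) τ (2 ^ (m - 2) - 1)).val
        + (-1) ^ (corrExp (gbf m π e f 1) τ (2 ^ (m - 2) - 1)).val
      + ((-1) ^ (corrExp (gbf m π e f 0) τ (3 * 2 ^ (m - 2) - τ)).val
        + (-1) ^ (corrExp (gbf m π e f 1) τ (3 * 2 ^ (m - 2) - τ)).val) = 0 := by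
  set p := π (m - 3)
  have hp : p < m - 2 := hπ (show m - 3 ∈ Set.Iio (m - 2) by simp; omega)
  have hpK : 2 ^ p < 2 ^ (m - 2) := Nat.pow_lt_pow_right one_lt_two hp
  have hK : 2 ^ (m - 1) = 2 * 2 ^ (m - 2) := by rw [← pow_succ']; congr 1; omega
  have hL : ∀ d, corrExp (gbf m π e f d) τ (2 ^ (m - 2) - 1)
      = d + ∑ i ∈ range (m - 2), e i + midGolayFun m π e f d (bitZ (τ - 1)) := fun d => by
    rw [corrExp, gbf_two_pow_sub_one e f hm hπ,
      show 2 ^ (m - 2) - 1 + τ = 2 ^ (m - 2) + (τ - 1) by omega,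
      gbf_two_pow_add e f hm hπ d (by omega)]
  have hR : ∀ d, corrExp (gbf m π e f d) τ (3 * 2 ^ (m - 2) - τ)
      = midGolayFun m π e f d (bitZ (2 * 2 ^ (m - 2) - τ)) + (1 + ∑ i ∈ range (m - 2), f i) :=
    fun d => by
    rw [corrExp, show 3 * 2 ^ (m - 2) - τ + τ = 3 * 2 ^ (m - 2) by omega,
      gbf_three_mul_two_pow e f hm hπ,
      show 3 * 2 ^ (m - 2) - τ = 2 ^ (m - 2) + (2 * 2 ^ (m - 2) - τ) by omega,
      gbf_two_pow_add e f hm hπ d (by omega)]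
  simp only [hL, hR, midGolayFun_one e f hm]
  apply neg_one_pow_val_sum_eq_zero
  rcases le_or_gt τ (2 ^ (m - 2)) with hτK | hτK
  · obtain ⟨hlow, -, -⟩ := bitZ_two_pow_add_of_lt (n := m - 2) (z := 2 ^ (m - 2) - 1 - (τ - 1))
      (by rw [pow_succ]; omega)
    have hW : bitZ (2 * 2 ^ (m - 2) - τ) p = 1 - bitZ (τ - 1) p := by
      rw [show 2 * 2 ^ (m - 2) - τ = 2 ^ (m - 2) + (2 ^ (m - 2) - 1 - (τ - 1)) by omega, hlow p hp,
        bitZ_two_pow_sub_one_sub (by omega) hp]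
    obtain hb | hb : bitZ (τ - 1) p = 0 ∨ bitZ (τ - 1) p = 1 := by
      generalize bitZ (τ - 1) p = b; revert b; decide
    · left
      rw [hW, hb]
      constructor <;> ring
    · right
      have hc := midGolayFun_two_pow_add_complement e f hm hπ (y := τ - 1) (by omega)
      rw [show 2 ^ (m - 2) + (2 ^ (m - 2) - 1 - (τ - 1)) = 2 * 2 ^ (m - 2) - τ by omega, hb] at hc
      rw [hW, hb]
      constructor <;> linear_combination (norm := (ring_nf; reduce_mod_char)) hc
  · have hy : bitZ (τ - 2 ^ (m - 2) - 1) p = 0 := bitZ_of_lt_two_pow (by omega)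
    have hY : bitZ (τ - 1) p = 0 := by
      obtain ⟨hlow, -, -⟩ := bitZ_two_pow_add_of_lt (n := m - 2) (z := τ - 2 ^ (m - 2) - 1)
        (by rw [pow_succ]; omega)
      rw [show τ - 1 = 2 ^ (m - 2) + (τ - 2 ^ (m - 2) - 1) by omega, hlow p hp, hy]
    have hW : bitZ (2 * 2 ^ (m - 2) - τ) p = 1 := by
      rw [show 2 * 2 ^ (m - 2) - τ = 2 ^ (m - 2) - 1 - (τ - 2 ^ (m - 2) - 1) by omega,
        bitZ_two_pow_sub_one_sub (by omega) hp, hy, sub_zero]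
    left
    rw [hY, hW]
    constructor <;> ring

end Boundary

lemma rho_add_rho_middle_eq_zero {m : ℕ} (hm : 3 ≤ m) {π : ℕ → ℕ}
    (hπ : Set.BijOn π (Set.Iio (m - 2)) (Set.Iio (m - 2))) (e f : ℕ → ZMod 2) {τ : ℕ}
    (hτ : τ ≠ 0) :
    rho (2 ^ (m - 1)) (fun k => PsiT (gbf m π e f 0) (2 ^ (m - 2) - 1) (k + 1)) τ
      + rho (2 ^ (m - 1)) (fun k => PsiT (gbf m π e f 1) (2 ^ (m - 2) - 1) (k + 1)) τ = 0 := by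
  have hKpos : 0 < 2 ^ (m - 2) := by positivity
  have hmid : ∀ d, rho (2 ^ (m - 1)) (fun k => PsiT (gbf m π e f d) (2 ^ (m - 2) - 1) (k + 1)) τ
      = rho (2 ^ (m - 2 + 1)) (Psi (midGolayFun m π e f d)) τ := fun d => by
    rw [show m - 2 + 1 = m - 1 by omega]
    refine rho_congr fun k hk => ?_
    rw [PsiT, Psi, Psi, show 2 ^ (m - 2) - 1 + (k + 1) = 2 ^ (m - 2) + k by omega,
      gbf_two_pow_add e f hm hπ.mapsTo d hk]
  rw [hmid, hmid]
  exact golayFun_rho_add_rho_eq_zero (consPath_bijOn hπ) (midAffine_add e f) hτ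

/-- For any integer `m ≥ 4`, a permutation `π` of `{0,…,m-3}` and
coefficients `e_i, f_i ∈ Z_2`, the truncated pair
`(a,b) = (Ψ_{2^{m-2}-1}(g^0), Ψ_{2^{m-2}-1}(g^1))` of length `N = 2^{m-1}+2`
is a binary Z-complementary pair with ZCZ width `2^{m-2} + 2^{π(m-3)} + 1`. -/
theorem ebzcp_construction (m : ℕ) (hm : 4 ≤ m) (π : ℕ → ℕ)
    (hπ : Set.BijOn π (Set.Iio (m - 2)) (Set.Iio (m - 2)))
    (e f : ℕ → ZMod 2)
    (N : ℕ) (hN : N = 2 ^ (m - 1) + 2)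
    (a b : ℕ → ℤ)
    (ha : a = PsiT (gbf m π e f 0) (2 ^ (m - 2) - 1))
    (hb : b = PsiT (gbf m π e f 1) (2 ^ (m - 2) - 1)) :
    ∀ τ : ℕ, 1 ≤ τ → τ ≤ 2 ^ (m - 2) + 2 ^ (π (m - 3)) →
      rho N a τ + rho N b τ = 0 := by
  intro τ hτ1 hτ2
  subst hN ha hb
  have hm3 : 3 ≤ m := by omega
  have hp : 2 ^ π (m - 3) < 2 ^ (m - 2) :=
    Nat.pow_lt_pow_right one_lt_two (hπ.mapsTo (show m - 3 ∈ Set.Iio (m - 2) by simp; omega))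
  have hK : 2 ^ (m - 1) = 2 * 2 ^ (m - 2) := by rw [← pow_succ']; congr 1; omega
  have hleft := fun d => PsiT_mul_PsiT (gbf m π e f d) (2 ^ (m - 2) - 1) (i := 0) (zero_add τ).symm
  have hright := fun d => PsiT_mul_PsiT (gbf m π e f d) (2 ^ (m - 2) - 1)
    (i := 2 ^ (m - 1) + 1 - τ) (j := 2 ^ (m - 1) + 1) (τ := τ) (by omega)
  rw [show 2 ^ (m - 2) - 1 + (2 ^ (m - 1) + 1 - τ) = 3 * 2 ^ (m - 2) - τ by omega] at hright
  simp only [add_zero] at hleft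
  rw [rho_add_two _ (by omega), rho_add_two _ (by omega), hleft, hleft, hright, hright]
  linear_combination rho_add_rho_middle_eq_zero hm3 hπ e f (by omega : τ ≠ 0)
    + corrExp_boundary_sum e f hm3 hπ.mapsTo hτ1 hτ2
end

section
/- There exist binary sequences a, b : {0,…,33} → {1,−1} of length 34 such that ρ_a(τ)+ρ_b(τ) = 0 for every integer τ with 1 ≤ τ ≤ 24, i.e., there exists an even-length binary Z-complementary pair of length 34 with zero correlation zone width 25. Such a pair is obtained from the construction with m = 6, permutation (π(0),π(1),π(2),π(3)) = (2,0,1,3) of {0,1,2,3}, and all linear coefficients e_i = f_i = 0, as (Ψ_{15}(g^0), Ψ_{15}(g^1)). -/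
open Finset

/-- The permutation `(π(0),π(1),π(2),π(3)) = (2,0,1,3)` of `{0,1,2,3}`. -/
def perm12 : ℕ → ℕ := fun i => if i = 0 then 2 else if i = 1 then 0 else if i = 2 then 1 else i

/-- The pair `(Ψ_{15}(g^0), Ψ_{15}(g^1))` from the construction with
`m = 6`, permutation `(2,0,1,3)` and zero linear coefficients is an even-length binary
Z-complementary pair of length `34` with ZCZ width `25`; in particular such a pair exists. -/
theorem ebzcp_length_34 :
    (∀ τ : ℕ, 1 ≤ τ → τ ≤ 24 →
        rho 34 (PsiT (gbf 6 perm12 0 0 0) 15) τ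
          + rho 34 (PsiT (gbf 6 perm12 0 0 1) 15) τ = 0) ∧
    ∃ a b : ℕ → ℤ,
      (∀ k < 34, a k = 1 ∨ a k = -1) ∧
      (∀ k < 34, b k = 1 ∨ b k = -1) ∧
      (∀ τ : ℕ, 1 ≤ τ → τ ≤ 24 → rho 34 a τ + rho 34 b τ = 0) := by
  have key : ∀ τ < 25, 1 ≤ τ →
      rho 34 (PsiT (gbf 6 perm12 0 0 0) 15) τ
        + rho 34 (PsiT (gbf 6 perm12 0 0 1) 15) τ = 0 := by decide
  have pm : ∀ (F : (ℕ → ZMod 2) → ZMod 2) (i : ℕ), Psi F i = 1 ∨ Psi F i = -1 := by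
    intro F i
    unfold Psi
    have h2 : (F (bitZ i)).val < 2 := ZMod.val_lt _
    interval_cases h : (F (bitZ i)).val <;> simp [h]
  have main : ∀ τ : ℕ, 1 ≤ τ → τ ≤ 24 →
      rho 34 (PsiT (gbf 6 perm12 0 0 0) 15) τ
        + rho 34 (PsiT (gbf 6 perm12 0 0 1) 15) τ = 0 := by
    intro τ h1 h2
    exact key τ (by omega) h1
  refine ⟨main, PsiT (gbf 6 perm12 0 0 0) 15, PsiT (gbf 6 perm12 0 0 1) 15,
    fun k _ => pm _ _, fun k _ => pm _ _, main⟩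
end

section
/- There exist binary sequences a, b : {0,…,17} → {1,−1} of length 18 such that ρ_a(τ)+ρ_b(τ) = 0 for every integer τ with 1 ≤ τ ≤ 9, i.e., there exists an even-length binary Z-complementary pair of length 18 with zero correlation zone width 10. Such a pair is obtained from the construction with m = 5, permutation (π(0),π(1),π(2)) = (1,2,0) of {0,1,2}, and all linear coefficients e_i = f_i = 0, as (Ψ_{7}(g^0), Ψ_{7}(g^1)). -/
open Finset

/-- The permutation `(π(0),π(1),π(2)) = (1,2,0)` of `{0,1,2}`. -/
def perm13 : ℕ → ℕ := fun i => if i = 0 then 1 else if i = 1 then 2 else if i = 2 then 0 else i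

/-- The pair `(Ψ_{7}(g^0), Ψ_{7}(g^1))` from the construction with
`m = 5`, permutation `(1,2,0)` and zero linear coefficients is an even-length binary
Z-complementary pair of length `18` with ZCZ width `10`; in particular such a pair exists. -/
theorem ebzcp_length_18 :
    (∀ τ : ℕ, 1 ≤ τ → τ ≤ 9 →
        rho 18 (PsiT (gbf 5 perm13 0 0 0) 7) τ
          + rho 18 (PsiT (gbf 5 perm13 0 0 1) 7) τ = 0) ∧
    ∃ a b : ℕ → ℤ,
      (∀ k < 18, a k = 1 ∨ a k = -1) ∧
      (∀ k < 18, b k = 1 ∨ b k = -1) ∧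
      (∀ τ : ℕ, 1 ≤ τ → τ ≤ 9 → rho 18 a τ + rho 18 b τ = 0) := by
  have key : ∀ τ : ℕ, 1 ≤ τ → τ ≤ 9 →
      rho 18 (PsiT (gbf 5 perm13 0 0 0) 7) τ
        + rho 18 (PsiT (gbf 5 perm13 0 0 1) 7) τ = 0 := by
    intro τ h1 h2
    interval_cases τ <;> decide
  refine ⟨key, PsiT (gbf 5 perm13 0 0 0) 7, PsiT (gbf 5 perm13 0 0 1) 7, ?_, ?_, key⟩ <;>
    · intro k hk
      interval_cases k <;> first | exact Or.inl (by decide) | exact Or.inr (by decide)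
end
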